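/- arXiv:1503.08257 — 3 statements merged into one kernel-verified Lean document; each statement's English description precedes it below -/
import Mathlib

section
/- Let (φ, 0, ψ), (α₀, 0, η), (φ, χ, ψ*), and (α₀, β, η*) be four points on the unit sphere S² with χ, ψ*, β, η*, ψ, η all nonnegative. Then the distance between the two points in the xz-plane is at most the distance between the corresponding points with the same first coordinates: |(φ,0,ψ) - (α₀,0,η)| ≤ |(φ,χ,ψ*) - (α₀,β,η*)|. -/
/-! The first coordinates agree, so only the (y, z)-parts matter. By the sphere equations
`(χ, ψs)` has length `ψ` and `(β, ηs)` has length `η`, and the claim reduces to the reverse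
triangle inequality `|ψ - η| ≤ |(χ, ψs) - (β, ηs)|` in the plane. -/

lemma sq_sub_le_of_sq_add_sq_eq {a b c d p q : ℝ} (hp : 0 ≤ p) (hq : 0 ≤ q)
    (hab : a ^ 2 + b ^ 2 = p ^ 2) (hcd : c ^ 2 + d ^ 2 = q ^ 2) :
    (p - q) ^ 2 ≤ (a - c) ^ 2 + (b - d) ^ 2 := by
  have cauchy_schwarz : a * c + b * d ≤ p * q := by
    have hsq : (a * c + b * d) ^ 2 ≤ (p * q) ^ 2 := by
      rw [mul_pow, ← hab, ← hcd]
      nlinarith [sq_nonneg (a * d - b * c)]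
    exact (abs_le_of_sq_le_sq hsq (mul_nonneg hp hq)).trans' (le_abs_self _)
  linear_combination 2 * cauchy_schwarz - hab - hcd

theorem stmt_6_general (φ ψ α₀ η χ ψs β ηs : ℝ)
    (h1 : φ ^ 2 + ψ ^ 2 = 1) (h2 : α₀ ^ 2 + η ^ 2 = 1)
    (h3 : φ ^ 2 + χ ^ 2 + ψs ^ 2 = 1) (h4 : α₀ ^ 2 + β ^ 2 + ηs ^ 2 = 1)
    (hψ : 0 ≤ ψ) (hη : 0 ≤ η) :
    Real.sqrt ((φ - α₀) ^ 2 + (0 - 0) ^ 2 + (ψ - η) ^ 2) ≤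
      Real.sqrt ((φ - α₀) ^ 2 + (χ - β) ^ 2 + (ψs - ηs) ^ 2) := by
  apply Real.sqrt_le_sqrt
  have yz_part := sq_sub_le_of_sq_add_sq_eq (a := χ) (b := ψs) (c := β) (d := ηs) hψ hη
    (by linarith) (by linarith)
  linarith

theorem stmt_6 (φ ψ α₀ η χ ψs β ηs : ℝ)
    (h1 : φ ^ 2 + ψ ^ 2 = 1) (h2 : α₀ ^ 2 + η ^ 2 = 1)
    (h3 : φ ^ 2 + χ ^ 2 + ψs ^ 2 = 1) (h4 : α₀ ^ 2 + β ^ 2 + ηs ^ 2 = 1)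
    (hχ : 0 ≤ χ) (hψs : 0 ≤ ψs) (hβ : 0 ≤ β) (hηs : 0 ≤ ηs)
    (hψ : 0 ≤ ψ) (hη : 0 ≤ η) :
    Real.sqrt ((φ - α₀) ^ 2 + (0 - 0) ^ 2 + (ψ - η) ^ 2) ≤
      Real.sqrt ((φ - α₀) ^ 2 + (χ - β) ^ 2 + (ψs - ηs) ^ 2) :=
  stmt_6_general φ ψ α₀ η χ ψs β ηs h1 h2 h3 h4 hψ hη
end

section
/- Let σ > 0, D₂ > 0, and define f(x) = 8D₂ x⁸ + 4(1+σ)x⁴ − 4σx², with a₀ = −f(√R) where R = R(σ,D₂) ∈ (0,1/2) is the unique real root of u³ + ((σ+1)/(4D₂))u − σ/(8D₂) = 0. Then W(θ) := f(sin(θ/2)) + a₀ is an even function of θ, W(θ) ≥ 0 for all θ ∈ [−π, π], and W(θ) = 0 for θ ∈ [−π,π] if and only if θ = ±β where β = 2 arcsin(√R). -/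
open Real Set

/-- With `p y = 8 D y⁴ + 4 (1 + σ) y² - 4 σ y`, the hypothesis on `R = s²` says `p' R = 0`,
so `R` is a double root of `p - p R`. -/
lemma octic_sub_octic_eq_sq_mul {D σ R s : ℝ}
    (hR : 32 * D * R ^ 3 + 8 * (σ + 1) * R - 4 * σ = 0) (hs : s ^ 2 = R) (x : ℝ) :
    8 * D * x ^ 8 + 4 * (1 + σ) * x ^ 4 - 4 * σ * x ^ 2
        - (8 * D * s ^ 8 + 4 * (1 + σ) * s ^ 4 - 4 * σ * s ^ 2) =
      (x ^ 2 - R) ^ 2 * (8 * D * ((x ^ 2 + R) ^ 2 + 2 * R ^ 2) + 4 * (1 + σ)) := by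
  subst hs
  linear_combination (x ^ 2 - s ^ 2) * hR

lemma pos_and_lt_half_of_cubic_eq_zero {D σ R : ℝ} (hσ : 0 < σ) (hD : 0 < D)
    (hR : 32 * D * R ^ 3 + 8 * (σ + 1) * R - 4 * σ = 0) : 0 < R ∧ R < 1 / 2 := by
  have hR0 : 0 < R := by
    by_contra! h
    nlinarith [mul_nonpos_of_nonneg_of_nonpos (mul_nonneg hD.le (sq_nonneg R)) h]
  exact ⟨hR0, by nlinarith [mul_pos hD (pow_pos hR0 3)]⟩

lemma sin_eq_iff_eq_arcsin {x s : ℝ} (hx : x ∈ Icc (-(π / 2)) (π / 2))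
    (hs₁ : -1 ≤ s) (hs₂ : s ≤ 1) : sin x = s ↔ x = arcsin s := by
  constructor
  · rintro rfl
    exact (arcsin_sin hx.1 hx.2).symm
  · rintro rfl
    exact sin_arcsin hs₁ hs₂

lemma sin_half_sq_eq_sq_iff {θ s : ℝ} (hθ : θ ∈ Icc (-π) π) (hs₁ : -1 ≤ s) (hs₂ : s ≤ 1) :
    sin (θ / 2) ^ 2 = s ^ 2 ↔ θ = 2 * arcsin s ∨ θ = -(2 * arcsin s) := by
  have hθ2 : θ / 2 ∈ Icc (-(π / 2)) (π / 2) := ⟨by linarith [hθ.1], by linarith [hθ.2]⟩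
  rw [sq_eq_sq_iff_eq_or_eq_neg, sin_eq_iff_eq_arcsin hθ2 hs₁ hs₂,
    sin_eq_iff_eq_arcsin hθ2 (by linarith) (by linarith), arcsin_neg]
  constructor <;> rintro (h | h) <;> [left; right; left; right] <;> linarith

theorem stmt_13_general (σ D₂ R : ℝ) (hσ : 0 < σ) (hD : 0 < D₂)
    (hRroot : R ^ 3 + ((σ + 1) / (4 * D₂)) * R - σ / (8 * D₂) = 0)
    (f : ℝ → ℝ)
    (hf : f = fun x => 8 * D₂ * x ^ 8 + 4 * (1 + σ) * x ^ 4 - 4 * σ * x ^ 2)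
    (a₀ : ℝ) (ha₀ : a₀ = -f (Real.sqrt R))
    (W : ℝ → ℝ) (hW : W = fun θ => f (Real.sin (θ / 2)) + a₀)
    (β : ℝ) (hβ : β = 2 * Real.arcsin (Real.sqrt R)) :
    (∀ θ : ℝ, W (-θ) = W θ) ∧
      (∀ θ ∈ Set.Icc (-π) π, 0 ≤ W θ) ∧
      (∀ θ ∈ Set.Icc (-π) π, W θ = 0 ↔ θ = β ∨ θ = -β) := by
  have hroot : 32 * D₂ * R ^ 3 + 8 * (σ + 1) * R - 4 * σ = 0 := by
    field_simp at hRroot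
    linear_combination hRroot
  obtain ⟨hR0, hR1⟩ := pos_and_lt_half_of_cubic_eq_zero hσ hD hroot
  have hsqrt : √R ^ 2 = R := sq_sqrt hR0.le
  have hWsq : ∀ θ, W θ = (sin (θ / 2) ^ 2 - R) ^ 2 *
      (8 * D₂ * ((sin (θ / 2) ^ 2 + R) ^ 2 + 2 * R ^ 2) + 4 * (1 + σ)) := by
    intro θ
    rw [← octic_sub_octic_eq_sq_mul hroot hsqrt, hW, ha₀, hf, sub_eq_add_neg]
  refine ⟨fun θ => by rw [hWsq, hWsq, neg_div, sin_neg, neg_sq],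
    fun θ _ => by rw [hWsq]; positivity, fun θ hθ => ?_⟩
  have hQ : 0 < 8 * D₂ * ((sin (θ / 2) ^ 2 + R) ^ 2 + 2 * R ^ 2) + 4 * (1 + σ) := by positivity
  rw [hWsq, mul_eq_zero, or_iff_left hQ.ne', sq_eq_zero_iff, sub_eq_zero, ← hsqrt, hβ]
  exact sin_half_sq_eq_sq_iff hθ (by linarith [sqrt_nonneg R]) (sqrt_le_one.mpr (by linarith))

theorem stmt_13 (σ D₂ R : ℝ) (hσ : 0 < σ) (hD : 0 < D₂)
    (hRroot : R ^ 3 + ((σ + 1) / (4 * D₂)) * R - σ / (8 * D₂) = 0)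
    (hR0 : 0 < R) (hR1 : R < 1 / 2)
    (f : ℝ → ℝ)
    (hf : f = fun x => 8 * D₂ * x ^ 8 + 4 * (1 + σ) * x ^ 4 - 4 * σ * x ^ 2)
    (a₀ : ℝ) (ha₀ : a₀ = -f (Real.sqrt R))
    (W : ℝ → ℝ) (hW : W = fun θ => f (Real.sin (θ / 2)) + a₀)
    (β : ℝ) (hβ : β = 2 * Real.arcsin (Real.sqrt R)) :
    (∀ θ : ℝ, W (-θ) = W θ) ∧
      (∀ θ ∈ Set.Icc (-π) π, 0 ≤ W θ) ∧
      (∀ θ ∈ Set.Icc (-π) π, W θ = 0 ↔ θ = β ∨ θ = -β) :=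
  stmt_13_general σ D₂ R hσ hD hRroot f hf a₀ ha₀ W hW β hβ
end

section
/- Let σ > 0 and D₂ > 0, and define on S² the potential W(n) = (D₂/2)(1−n₃)⁴ + (1−n₃)² + σ(n₂² + n₃²) + b₀. Let B = 1 − 2√((1+σ)/(3D₂)) · sinh((1/3) arsinh((3σ/(2(1+σ))) √(3D₂/(1+σ)))). Then the function h(z) = (D₂/2)(1−z)⁴ + (1−z)² + σ z² restricted to [−1,1] attains its minimum exactly at z = B, and B → 1/(1+σ) as D₂ → 0⁺. -/
open Filter

noncomputable def hCL (σ D₂ z : ℝ) : ℝ :=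
  (D₂ / 2) * (1 - z) ^ 4 + (1 - z) ^ 2 + σ * z ^ 2

noncomputable def Bmin (σ D₂ : ℝ) : ℝ :=
  1 - 2 * Real.sqrt ((1 + σ) / (3 * D₂)) *
    Real.sinh ((1 / 3) * Real.arsinh ((3 * σ / (2 * (1 + σ))) *
      Real.sqrt (3 * D₂ / (1 + σ))))

/-!
With `t = 1 - z`, the critical-point equation `h'(z) = 0` is the depressed cubic
`D₂ t³ + (1 + σ) t = σ`, whose unique real root is given by the hyperbolic form of Cardano's
formula; this root is `1 - B`. At a root `c`, `h z - h c` factors as `(z - c)²` times a positive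
quadratic, so `c` is the strict global minimiser of `h`. The cubic also forces
`(1 + σ) B = 1 + D₂ (1 - B)³` with `0 < 1 - B < 1`, which gives `B → 1 / (1 + σ)` as `D₂ → 0⁺`.
-/

open Real in
lemma cube_add_mul_two_mul_sinh_arsinh_div_three (a y : ℝ) :
    (2 * a * sinh (arsinh y / 3)) ^ 3 + 3 * a ^ 2 * (2 * a * sinh (arsinh y / 3)) =
      2 * a ^ 3 * y := by
  have h := sinh_three_mul (arsinh y / 3)
  rw [mul_div_cancel₀ _ three_ne_zero, sinh_arsinh] at h
  linear_combination (-2 * a ^ 3) * h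

lemma one_sub_Bmin_cubic {σ D₂ : ℝ} (hσ : 0 < 1 + σ) (hD : 0 < D₂) :
    D₂ * (1 - Bmin σ D₂) ^ 3 + (1 + σ) * (1 - Bmin σ D₂) = σ := by
  set a := Real.sqrt ((1 + σ) / (3 * D₂))
  set y := 3 * σ / (2 * (1 + σ)) * Real.sqrt (3 * D₂ / (1 + σ))
  have ht : 1 - Bmin σ D₂ = 2 * a * Real.sinh (Real.arsinh y / 3) := by
    simp only [Bmin, a, y]; ring_nf
  have ha2 : a ^ 2 = (1 + σ) / (3 * D₂) := Real.sq_sqrt (by positivity)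
  have hay : a * y = 3 * σ / (2 * (1 + σ)) := by
    have : a * Real.sqrt (3 * D₂ / (1 + σ)) = 1 := by
      rw [← Real.sqrt_mul (by positivity), div_mul_div_cancel₀', div_self, Real.sqrt_one] <;>
        positivity
    linear_combination (3 * σ / (2 * (1 + σ))) * this
  have hcube := cube_add_mul_two_mul_sinh_arsinh_div_three a y
  rw [← ht, ha2] at hcube
  have h3a : 2 * a ^ 3 * y = σ / D₂ := by
    rw [show 2 * a ^ 3 * y = 2 * a ^ 2 * (a * y) by ring, ha2, hay]
    field_simp
  rw [h3a] at hcube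
  field_simp at hcube
  linear_combination hcube

lemma hCL_sub_hCL_of_cubic {σ D₂ c : ℝ} (hc : D₂ * (1 - c) ^ 3 + (1 + σ) * (1 - c) = σ)
    (z : ℝ) :
    hCL σ D₂ z - hCL σ D₂ c =
      (z - c) ^ 2 * ((1 + σ) + D₂ / 2 * ((2 - z - c) ^ 2 + 2 * (1 - c) ^ 2)) := by
  simp only [hCL]
  linear_combination 2 * (c - z) * hc

lemma hCL_lt_hCL_of_cubic {σ D₂ c z : ℝ} (hσ : 0 < 1 + σ) (hD : 0 ≤ D₂)
    (hc : D₂ * (1 - c) ^ 3 + (1 + σ) * (1 - c) = σ) (hz : z ≠ c) :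
    hCL σ D₂ c < hCL σ D₂ z := by
  rw [← sub_pos, hCL_sub_hCL_of_cubic hc z]
  exact mul_pos (sq_pos_of_ne_zero (sub_ne_zero.2 hz)) (by positivity)

lemma cubic_root_mem_Ioo {σ D₂ t : ℝ} (hσ : 0 < σ) (hD : 0 < D₂)
    (ht : D₂ * t ^ 3 + (1 + σ) * t = σ) : t ∈ Set.Ioo 0 1 := by
  have hpos : 0 < t := by
    by_contra! h
    nlinarith [mul_nonneg (mul_nonneg hD.le (neg_nonneg.2 h)) (sq_nonneg t)]
  exact ⟨hpos, by nlinarith [pow_pos hpos 3]⟩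

lemma Bmin_eq_div {σ D₂ : ℝ} (hσ : 0 < 1 + σ) (hD : 0 < D₂) :
    Bmin σ D₂ = (1 + D₂ * (1 - Bmin σ D₂) ^ 3) / (1 + σ) := by
  rw [eq_div_iff hσ.ne']
  linear_combination -one_sub_Bmin_cubic hσ hD

lemma tendsto_Bmin {σ : ℝ} (hσ : 0 < σ) :
    Tendsto (fun D₂ => Bmin σ D₂) (nhdsWithin 0 (Set.Ioi 0)) (nhds (1 / (1 + σ))) := by
  have h1σ : 0 < 1 + σ := by linarith
  have hupper : Tendsto (fun D₂ : ℝ => (1 + D₂) / (1 + σ)) (nhdsWithin 0 (Set.Ioi 0))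
      (nhds (1 / (1 + σ))) := by
    apply tendsto_nhdsWithin_of_tendsto_nhds
    simpa using ((tendsto_const_nhds (x := (1 : ℝ))).add (tendsto_id (x := nhds 0))).div_const
      (1 + σ)
  have hbounds : ∀ᶠ D₂ in nhdsWithin 0 (Set.Ioi 0),
      1 / (1 + σ) ≤ Bmin σ D₂ ∧ Bmin σ D₂ ≤ (1 + D₂) / (1 + σ) := by
    filter_upwards [self_mem_nhdsWithin] with D₂ (hD : 0 < D₂)
    obtain ⟨ht0, ht1⟩ := cubic_root_mem_Ioo hσ hD (one_sub_Bmin_cubic h1σ hD)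
    rw [Bmin_eq_div h1σ hD]
    constructor <;> gcongr
    · exact le_add_of_nonneg_right (by positivity)
    · exact mul_le_of_le_one_right hD.le (pow_le_one₀ ht0.le ht1.le)
  exact tendsto_of_tendsto_of_tendsto_of_le_of_le' tendsto_const_nhds hupper
    (hbounds.mono fun _ => And.left) (hbounds.mono fun _ => And.right)

theorem stmt_18 (σ : ℝ) (hσ : 0 < σ) :
    (∀ D₂ : ℝ, 0 < D₂ →
      Bmin σ D₂ ∈ Set.Icc (-1 : ℝ) 1 ∧
        ∀ z ∈ Set.Icc (-1 : ℝ) 1,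
          hCL σ D₂ (Bmin σ D₂) ≤ hCL σ D₂ z ∧
            (hCL σ D₂ z = hCL σ D₂ (Bmin σ D₂) → z = Bmin σ D₂)) ∧
      Tendsto (fun D₂ => Bmin σ D₂) (nhdsWithin 0 (Set.Ioi 0))
        (nhds (1 / (1 + σ))) := by
  have h1σ : 0 < 1 + σ := by linarith
  refine ⟨fun D₂ hD => ?_, tendsto_Bmin hσ⟩
  have hcubic := one_sub_Bmin_cubic h1σ hD
  obtain ⟨ht0, ht1⟩ := cubic_root_mem_Ioo hσ hD hcubic
  refine ⟨⟨by linarith, by linarith⟩, fun z _ => ⟨?_, fun heq => ?_⟩⟩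
  · rcases eq_or_ne z (Bmin σ D₂) with rfl | hz
    · exact le_rfl
    · exact (hCL_lt_hCL_of_cubic h1σ hD.le hcubic hz).le
  · by_contra hz
    exact (hCL_lt_hCL_of_cubic h1σ hD.le hcubic hz).ne' heq
end
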